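/- With Ω, Ω̂ as above: if Ω = Ω_n > 1 for some n ≠ k, then Ω̂ > 1; and if Ω = Ω_k and Ω_k > 1/max(ρ_x^{1-λ}, (1-ρ_x)^{1-λ}) ≥ 1, then Ω̂ > 1. -/

import Mathlib

/-! Inserting a node at the `k`-th interval only replaces `Ω_k` by the two values
`ρ^(1-λ) Ω_k` and `(1-ρ)^(1-λ) Ω_k` in the maximum. So any `Ω_n > 1` with `n ≠ k` survives in `Ω̂`, and
otherwise `Ω̂ ≥ max(ρ^(1-λ), (1-ρ)^(1-λ)) Ω_k > 1`. -/

lemma one_lt_max_mul_of_one_div_max_lt {K : Type*} [Field K] [LinearOrder K]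
    [IsStrictOrderedRing K] {a b x : K} (hab : 0 < max a b) (h : 1 / max a b < x) :
    1 < max (a * x) (b * x) := by
  have hx : 0 < x := (one_div_pos.2 hab).trans h
  rw [← max_mul_of_nonneg a b hx.le, mul_comm]
  exact (div_lt_iff₀ hab).1 h

theorem Omega_hat_gt_one_general (N k : ℕ) (ρx lam : ℝ)
    (Ωf : ℕ → ℝ) (Ω Ωkl Ωkr Ωhat : ℝ)
    (hΩkl : Ωkl = ρx ^ (1 - lam) * Ωf k)
    (hΩkr : Ωkr = (1 - ρx) ^ (1 - lam) * Ωf k)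
    (hΩhat : Ωhat = ((Finset.Icc 1 N).erase k).fold max (max Ωkl Ωkr) Ωf) :
    ((∃ n ∈ Finset.Icc 1 N, n ≠ k ∧ Ω = Ωf n ∧ 1 < Ωf n) → 1 < Ωhat) ∧
    (Ω = Ωf k →
      1 / max (ρx ^ (1 - lam)) ((1 - ρx) ^ (1 - lam)) < Ωf k →
      1 ≤ 1 / max (ρx ^ (1 - lam)) ((1 - ρx) ^ (1 - lam)) →
      1 < Ωhat) := by
  subst hΩkl hΩkr hΩhat
  constructor
  · rintro ⟨n, hn, hnk, -, hn_gt⟩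
    exact (Finset.lt_fold_max 1).2 (Or.inr ⟨n, Finset.mem_erase.2 ⟨hnk, hn⟩, hn_gt⟩)
  · intro _ hlt hle
    have hmax_pos := one_div_pos.1 (one_pos.trans_le hle)
    exact (Finset.lt_fold_max 1).2 (Or.inl (one_lt_max_mul_of_one_div_max_lt hmax_pos hlt))

/-- Cases in which the inserted-node quantity `Ω̂` exceeds one. -/
theorem Omega_hat_gt_one (N k : ℕ) (hN : 1 ≤ N) (hk : k ∈ Finset.Icc 1 N)
    (ρx lam : ℝ) (hρ0 : 0 < ρx) (hρ1 : ρx < 1) (hlam0 : 0 < lam) (hlam1 : lam ≤ 1)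
    (Ωf : ℕ → ℝ) (Ω Ωkl Ωkr Ωhat : ℝ)
    (hΩ : Ω = (Finset.Icc 1 N).sup' (Finset.nonempty_Icc.2 hN) Ωf)
    (hΩkl : Ωkl = ρx ^ (1 - lam) * Ωf k)
    (hΩkr : Ωkr = (1 - ρx) ^ (1 - lam) * Ωf k)
    (hΩhat : Ωhat = ((Finset.Icc 1 N).erase k).fold max (max Ωkl Ωkr) Ωf) :
    ((∃ n ∈ Finset.Icc 1 N, n ≠ k ∧ Ω = Ωf n ∧ 1 < Ωf n) → 1 < Ωhat) ∧
    (Ω = Ωf k →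
      1 / max (ρx ^ (1 - lam)) ((1 - ρx) ^ (1 - lam)) < Ωf k →
      1 ≤ 1 / max (ρx ^ (1 - lam)) ((1 - ρx) ^ (1 - lam)) →
      1 < Ωhat) :=
  Omega_hat_gt_one_general N k ρx lam Ωf Ω Ωkl Ωkr Ωhat hΩkl hΩkr hΩhat
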